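/- arXiv:2502.15428 — 3 statements merged into one kernel-verified Lean document; each statement's English description precedes it below -/
import Mathlib

section
/- In a finite simple graph G where every edge is incident to the faulty set F (|F| = f), with maximal matching M and triangle set T (unmatched vertices forming a triangle with an edge of M) and crash set C ⊆ F disjoint from vertices of M and T, the quantity |C| + |M| + |T| is at most f. -/
/-!
Choose a faulty endpoint `p e` of every matching edge `e`, and for every `t ∈ T` a second faulty
vertex `s t` of the triangle on `t` and `et t`, different from `p (et t)`: either `t` itself, or,
when `t` is correct, the other endpoint of `et t`, which is faulty because both edges from `t` to
`et t` need a faulty endpoint. Since `C` avoids the matched vertices and `T`, and distinct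
matching edges share no vertex, `C`, `p` and `s` pick pairwise distinct faulty vertices.
-/

namespace Finset

theorem card_add_card_add_card_le_of_injOn {α β γ : Type*} [DecidableEq α]
    {C F : Finset α} {M : Finset β} {T : Finset γ} {p : β → α} {s : γ → α}
    (hCF : C ⊆ F) (hpF : ∀ e ∈ M, p e ∈ F) (hsF : ∀ t ∈ T, s t ∈ F)
    (hp : Set.InjOn p M) (hs : Set.InjOn s T)
    (hCp : ∀ v ∈ C, ∀ e ∈ M, p e ≠ v) (hCs : ∀ v ∈ C, ∀ t ∈ T, s t ≠ v)
    (hps : ∀ e ∈ M, ∀ t ∈ T, p e ≠ s t) :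
    C.card + M.card + T.card ≤ F.card := by
  have hdisj₁ : Disjoint C (M.image p) := by
    simpa [disjoint_left] using fun v hv e he => hCp v hv e he
  have hdisj₂ : Disjoint (C ∪ M.image p) (T.image s) := by
    rw [disjoint_union_left]
    simp only [disjoint_left, mem_image, not_exists, not_and]
    exact ⟨fun v hv t ht h => hCs v hv t ht h,
      fun _ ⟨e, he, hv⟩ t ht h => hps e he t ht (hv.trans h.symm)⟩
  calc C.card + M.card + T.card = (C ∪ M.image p ∪ T.image s).card := by
        rw [card_union_of_disjoint hdisj₂, card_union_of_disjoint hdisj₁,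
          card_image_of_injOn hp, card_image_of_injOn hs]
    _ ≤ F.card := card_le_card <| by
        simpa [union_subset_iff, image_subset_iff] using ⟨hCF, hpF, hsF⟩

end Finset

namespace SimpleGraph

variable {V : Type*} {G : SimpleGraph V} {F : Finset V}

theorem mem_of_adj_of_notMem (hcover : ∀ e ∈ G.edgeSet, ∃ w ∈ F, w ∈ e) {t a : V}
    (h : G.Adj t a) (ht : t ∉ F) : a ∈ F := by
  obtain ⟨w, hwF, hw⟩ := hcover s(t, a) h
  rcases Sym2.mem_iff.mp hw with rfl | rfl
  · exact absurd hwF ht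
  · exact hwF

theorem exists_mem_ne_of_adj_of_adj (hcover : ∀ e ∈ G.edgeSet, ∃ w ∈ F, w ∈ e)
    {t a b p : V} (hta : G.Adj t a) (htb : G.Adj t b) (hab : a ≠ b) (hpt : p ≠ t) :
    ∃ x ∈ F, (x = t ∨ x ∈ s(a, b)) ∧ x ≠ p := by
  by_cases ht : t ∈ F
  · exact ⟨t, ht, Or.inl rfl, hpt.symm⟩
  by_cases hpa : p = a
  · exact ⟨b, mem_of_adj_of_notMem hcover htb ht, Or.inr (Sym2.mem_mk_right a b), hpa ▸ hab.symm⟩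
  · exact ⟨a, mem_of_adj_of_notMem hcover hta ht, Or.inr (Sym2.mem_mk_left a b), Ne.symm hpa⟩

end SimpleGraph

section VertexDisjoint

variable {V : Type*} {M : Finset (Sym2 V)}

theorem eq_of_mem_of_mem_of_vertexDisjoint
    (hM : ∀ e ∈ M, ∀ e' ∈ M, e ≠ e' → ∀ w : V, w ∈ e → w ∉ e') {e e' : Sym2 V} {w : V}
    (he : e ∈ M) (he' : e' ∈ M) (hw : w ∈ e) (hw' : w ∈ e') : e = e' :=
  by_contra fun hne => hM e he e' he' hne w hw hw'

variable {T : Finset V} {et : V → Sym2 V} {s : V → V}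

theorem eq_of_apply_mem_of_vertexDisjoint
    (hM : ∀ e ∈ M, ∀ e' ∈ M, e ≠ e' → ∀ w : V, w ∈ e → w ∉ e')
    (hTM : ∀ t ∈ T, ∀ e ∈ M, t ∉ e) (hetM : ∀ t ∈ T, et t ∈ M)
    (hs : ∀ t ∈ T, s t = t ∨ s t ∈ et t) {t : V} {e : Sym2 V}
    (ht : t ∈ T) (he : e ∈ M) (hse : s t ∈ e) : e = et t := by
  rcases hs t ht with h | h
  · exact absurd (h ▸ hse) (hTM t ht e he)
  · exact eq_of_mem_of_mem_of_vertexDisjoint hM he (hetM t ht) hse h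

theorem injOn_of_vertexDisjoint
    (hM : ∀ e ∈ M, ∀ e' ∈ M, e ≠ e' → ∀ w : V, w ∈ e → w ∉ e')
    (hTM : ∀ t ∈ T, ∀ e ∈ M, t ∉ e) (hetM : ∀ t ∈ T, et t ∈ M) (het : Set.InjOn et T)
    (hs : ∀ t ∈ T, s t = t ∨ s t ∈ et t) : Set.InjOn s T := by
  intro t ht t' ht' h
  rcases hs t ht with h₁ | h₁
  · rcases hs t' ht' with h₂ | h₂
    · exact h₁.symm.trans (h.trans h₂)
    · exact het ht ht' (eq_of_apply_mem_of_vertexDisjoint hM hTM hetM hs ht (hetM t' ht')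
        (h ▸ h₂)).symm
  · exact het ht ht' (eq_of_apply_mem_of_vertexDisjoint hM hTM hetM hs ht' (hetM t ht) (h ▸ h₁))

end VertexDisjoint

theorem stmt8_general {V : Type*} (G : SimpleGraph V)
    (F : Finset V) (f : ℕ) (hF : F.card = f)
    (hcover : ∀ e ∈ G.edgeSet, ∃ w ∈ F, w ∈ e)
    (M : Finset (Sym2 V))
    (hMedges : ∀ e ∈ M, e ∈ G.edgeSet)
    (hMdisj : ∀ e ∈ M, ∀ e' ∈ M, e ≠ e' → ∀ w : V, w ∈ e → w ∉ e')
    (T : Finset V) (et : V → Sym2 V)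
    (hTunmatched : ∀ v ∈ T, ∀ e ∈ M, v ∉ e)
    (hTtri : ∀ v ∈ T, et v ∈ M ∧ ∃ a b : V, et v = s(a, b) ∧ G.Adj v a ∧ G.Adj v b)
    (hTinj : ∀ v ∈ T, ∀ w ∈ T, et v = et w → v = w)
    (C : Finset V) (hCF : C ⊆ F)
    (hCM : ∀ v ∈ C, ∀ e ∈ M, v ∉ e)
    (hCT : ∀ v ∈ C, v ∉ T) :
    C.card + M.card + T.card ≤ f := by
  classical
  have hpex (e : Sym2 V) : ∃ w ∈ e, e ∈ M → w ∈ F :=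
    if he : e ∈ M then (hcover e (hMedges e he)).imp fun _ ⟨hwF, hw⟩ => ⟨hw, fun _ => hwF⟩
    else ⟨_, Sym2.out_fst_mem e, (absurd · he)⟩
  choose p hpe hpF using hpex
  have hsex : ∀ t ∈ T, ∃ x ∈ F, (x = t ∨ x ∈ et t) ∧ x ≠ p (et t) := by
    intro t ht
    obtain ⟨hetM, a, b, hab, hta, htb⟩ := hTtri t ht
    have hadj : G.Adj a b := by simpa [hab] using hMedges _ hetM
    rw [hab] at hetM ⊢
    exact SimpleGraph.exists_mem_ne_of_adj_of_adj hcover hta htb hadj.ne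
      fun h => hTunmatched t ht _ hetM (h ▸ hpe _)
  choose! s hsF hs hsp using hsex
  have hetM t (ht : t ∈ T) : et t ∈ M := (hTtri t ht).1
  subst hF
  refine Finset.card_add_card_add_card_le_of_injOn hCF hpF hsF
    (fun e he e' he' h => eq_of_mem_of_mem_of_vertexDisjoint hMdisj he he' (hpe e) (h ▸ hpe e'))
    (injOn_of_vertexDisjoint hMdisj hTunmatched hetM (fun v hv w hw => hTinj v hv w hw) hs)
    (fun v hv e he h => hCM v hv e he (h ▸ hpe e)) ?_ ?_
  · intro v hv t ht h
    rcases hs t ht with h' | h'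
    · exact hCT v hv (h ▸ h'.symm ▸ ht)
    · exact hCM v hv _ (hetM t ht) (h ▸ h')
  · intro e he t ht h
    exact hsp t ht (eq_of_apply_mem_of_vertexDisjoint hMdisj hTunmatched hetM hs ht he
      (h ▸ hpe e) ▸ h.symm)

/-- With every edge incident to the faulty set `F` (`|F| = f`), `M` a maximal
matching, `T` the triangle set (each element associated to a distinct edge of `M`),
and `C ⊆ F` a crash set disjoint from the vertices of `M` and from `T`,
one has `|C| + |M| + |T| ≤ f`. -/
theorem stmt8 {V : Type*} [Fintype V] [DecidableEq V] (G : SimpleGraph V)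
    (F : Finset V) (f : ℕ) (hF : F.card = f)
    (hcover : ∀ e ∈ G.edgeSet, ∃ w ∈ F, w ∈ e)
    (M : Finset (Sym2 V))
    (hMedges : ∀ e ∈ M, e ∈ G.edgeSet)
    (hMdisj : ∀ e ∈ M, ∀ e' ∈ M, e ≠ e' → ∀ w : V, w ∈ e → w ∉ e')
    (hMmax : ∀ e ∈ G.edgeSet, e ∉ M → ∃ e' ∈ M, ∃ w : V, w ∈ e ∧ w ∈ e')
    (T : Finset V) (et : V → Sym2 V)
    (hTunmatched : ∀ v ∈ T, ∀ e ∈ M, v ∉ e)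
    (hTtri : ∀ v ∈ T, et v ∈ M ∧ ∃ a b : V, et v = s(a, b) ∧ G.Adj v a ∧ G.Adj v b)
    (hTinj : ∀ v ∈ T, ∀ w ∈ T, et v = et w → v = w)
    (C : Finset V) (hCF : C ⊆ F)
    (hCM : ∀ v ∈ C, ∀ e ∈ M, v ∉ e)
    (hCT : ∀ v ∈ C, v ∉ T) :
    C.card + M.card + T.card ≤ f :=
  stmt8_general G F f hF hcover M hMedges hMdisj T et hTunmatched hTtri hTinj C hCF hCM hCT
end

section
/- In a three-level tree where the root waits for aggregates from intermediate nodes accounting for at least n − f + u votes (including the root's own vote), if the root does not obtain this many votes then either some intermediate node fails to deliver a valid aggregate (yielding one suspicion between internal nodes), or at least u + 1 leaf votes are missing (and each missing leaf is suspected by its parent), i.e., at least u + 1 leaves get suspected. -/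
theorem stmt12_general {V : Type*} [DecidableEq V]
    (n f u : ℕ)
    (S Votes Internal : Finset V)
    (hS : n - f + u ≤ S.card) (hVS : Votes ⊆ S)
    (hfail : Votes.card < n - f) :
    (∃ v ∈ S \ Votes, v ∈ Internal) ∨
      u + 1 ≤ ((S \ Votes).filter (fun v => v ∉ Internal)).card := by
  refine or_iff_not_imp_left.mpr fun hinternal => ?_
  have hall_leaves : ∀ v ∈ S \ Votes, v ∉ Internal := fun v hv hvI => hinternal ⟨v, hv, hvI⟩
  rw [Finset.filter_true_of_mem hall_leaves, Finset.card_sdiff_of_subset hVS]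
  omega

/-- The root waits for votes from a set `S` of nodes (the chosen subtrees) accounting
for at least `n - f + u` votes.  If fewer than `n - f` votes are obtained, then either
some internal node is missing (yielding one suspicion between internal nodes), or at
least `u + 1` leaves are missing and each is suspected by its parent. -/
theorem stmt12 {V : Type*} [Fintype V] [DecidableEq V]
    (n f u : ℕ) (hfn : f ≤ n)
    (S Votes Internal : Finset V)
    (hS : n - f + u ≤ S.card) (hVS : Votes ⊆ S)
    (hfail : Votes.card < n - f) :
    (∃ v ∈ S \ Votes, v ∈ Internal) ∨
      u + 1 ≤ ((S \ Votes).filter (fun v => v ∉ Internal)).card :=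
  stmt12_general n f u S Votes Internal hS hVS hfail
end

section
/- If every maximal matching edge of M contains at least one faulty vertex, every vertex of the crash set C is faulty, and every triangle vertex t ∈ T that is non-faulty forces both endpoints of its triangle's matching edge to be faulty (edges of M being pairwise disjoint and each matching edge associated to at most one triangle vertex), then the number of distinct faulty vertices identified is at least |C| + |M| + |T|; hence if |C| + |M| + |T| = t equals the true number of faults, all faulty replicas are excluded from the candidate set. -/
/-!
Since `C`, `T` and `V(M)` are pairwise disjoint, `|F| ≥ |F ∩ C| + |F ∩ T| + |F ∩ V(M)|`, with
equality only if `F ⊆ C ∪ T ∪ V(M)`. The faults in `V(M)` are counted edge by edge: every edge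
of `M` carries at least one, and the edge `e_t` of a non-faulty `t ∈ T` carries two, the extra
one paying for `t`. As the `e_t` are distinct, `|F ∩ V(M)| ≥ |M| + |T \ F|`, while
`|F ∩ C| + |F ∩ T| = |C| + |T| - |T \ F|`.
-/

open Finset

theorem Finset.card_add_card_le_sum_of_subset {ι : Type*} {s t : Finset ι} {f : ι → ℕ}
    (hts : t ⊆ s) (h₁ : ∀ i ∈ s, 1 ≤ f i) (h₂ : ∀ i ∈ t, 2 ≤ f i) :
    #s + #t ≤ ∑ i ∈ s, f i := by
  classical
  calc #s + #t = ∑ i ∈ s, (1 + if i ∈ t then 1 else 0) := by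
        rw [sum_add_distrib, sum_ite_mem, inter_eq_right.mpr hts]; simp
    _ ≤ ∑ i ∈ s, f i := sum_le_sum fun i hi => by
        split_ifs with hi'
        · exact h₂ i hi'
        · simpa using h₁ i hi

section Matching

variable {V : Type*} [DecidableEq V]

def matchedVertices (M : Finset (Sym2 V)) : Finset V := M.biUnion Sym2.toFinset

theorem mem_matchedVertices {M : Finset (Sym2 V)} {v : V} :
    v ∈ matchedVertices M ↔ ∃ e ∈ M, v ∈ e := by
  simp [matchedVertices, Sym2.mem_toFinset]

theorem card_inter_matchedVertices {M : Finset (Sym2 V)}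
    (hM : (M : Set (Sym2 V)).PairwiseDisjoint Sym2.toFinset) (F : Finset V) :
    #(F ∩ matchedVertices M) = ∑ e ∈ M, #(F ∩ e.toFinset) := by
  rw [matchedVertices, inter_biUnion]
  exact card_biUnion fun e he e' he' hne =>
    (hM he he' hne).mono inter_subset_right inter_subset_right

theorem card_inter_toFinset_of_forall_mem {F : Finset V} {e : Sym2 V} (he : ¬e.IsDiag)
    (hF : ∀ w ∈ e, w ∈ F) : #(F ∩ e.toFinset) = 2 := by
  rw [inter_eq_right.mpr fun w hw => hF w (Sym2.mem_toFinset.mp hw),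
    Sym2.card_toFinset_of_not_isDiag e he]

theorem card_add_card_sdiff_le_sum_card_inter {F T : Finset V} {M : Finset (Sym2 V)}
    {et : V → Sym2 V} (hMloop : ∀ e ∈ M, ¬ e.IsDiag) (hMF : ∀ e ∈ M, ∃ w ∈ F, w ∈ e)
    (hTe : ∀ v ∈ T, et v ∈ M) (hTinj : Set.InjOn et T)
    (hTforce : ∀ v ∈ T, v ∉ F → ∀ w : V, w ∈ et v → w ∈ F) :
    #M + #(T \ F) ≤ ∑ e ∈ M, #(F ∩ e.toFinset) := by
  rw [← card_image_of_injOn (hTinj.mono (coe_subset.mpr sdiff_subset))]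
  refine card_add_card_le_sum_of_subset ?_ (fun e he => ?_) (fun e he => ?_)
  · intro e he
    obtain ⟨v, hv, rfl⟩ := mem_image.mp he
    exact hTe v (mem_sdiff.mp hv).1
  · obtain ⟨w, hwF, hwe⟩ := hMF e he
    exact card_pos.mpr ⟨w, mem_inter.mpr ⟨hwF, Sym2.mem_toFinset.mpr hwe⟩⟩
  · obtain ⟨v, hv, rfl⟩ := mem_image.mp he
    obtain ⟨hvT, hvF⟩ := mem_sdiff.mp hv
    exact (card_inter_toFinset_of_forall_mem (hMloop _ (hTe v hvT)) (hTforce v hvT hvF)).ge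

end Matching

theorem stmt14_general {V : Type*} [DecidableEq V]
    (F : Finset V) (t : ℕ) (hF : F.card = t)
    (M : Finset (Sym2 V))
    (hMloop : ∀ e ∈ M, ¬ e.IsDiag)
    (hMdisj : ∀ e ∈ M, ∀ e' ∈ M, e ≠ e' → ∀ w : V, w ∈ e → w ∉ e')
    (hMF : ∀ e ∈ M, ∃ w ∈ F, w ∈ e)
    (T : Finset V) (et : V → Sym2 V)
    (hTunmatched : ∀ v ∈ T, ∀ e ∈ M, v ∉ e)
    (hTe : ∀ v ∈ T, et v ∈ M)
    (hTinj : ∀ v ∈ T, ∀ w ∈ T, et v = et w → v = w)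
    (hTforce : ∀ v ∈ T, v ∉ F → ∀ w : V, w ∈ et v → w ∈ F)
    (C : Finset V) (hCF : C ⊆ F)
    (hCM : ∀ v ∈ C, ∀ e ∈ M, v ∉ e)
    (hCT : ∀ v ∈ C, v ∉ T) :
    C.card + M.card + T.card ≤ t ∧
      (C.card + M.card + T.card = t →
        ∀ v ∈ F, v ∈ C ∨ (∃ e ∈ M, v ∈ e) ∨ v ∈ T) := by
  have hMpw : (M : Set (Sym2 V)).PairwiseDisjoint Sym2.toFinset := fun e he e' he' hne =>
    disjoint_left.mpr fun w hw hw' =>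
      hMdisj e he e' he' hne w (Sym2.mem_toFinset.mp hw) (Sym2.mem_toFinset.mp hw')
  have hCT' : Disjoint C T := disjoint_left.mpr hCT
  have hCTM : Disjoint (C ∪ T) (matchedVertices M) := disjoint_left.mpr fun v hv hvM => by
    obtain ⟨e, he, hve⟩ := mem_matchedVertices.mp hvM
    rcases mem_union.mp hv with hvC | hvT
    exacts [hCM v hvC e he hve, hTunmatched v hvT e he hve]
  have hcount : #C + #M + #T ≤ #(F ∩ (C ∪ T ∪ matchedVertices M)) := by
    have hsplit := card_inter_add_card_sdiff T F
    have hmatched := card_add_card_sdiff_le_sum_card_inter hMloop hMF hTe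
      (fun v hv w hw => hTinj v hv w hw) hTforce
    rw [inter_union_distrib_left,
      card_union_of_disjoint (hCTM.mono inter_subset_right inter_subset_right),
      inter_union_distrib_left, card_union_of_disjoint (hCT'.mono inter_subset_right inter_subset_right),
      card_inter_matchedVertices hMpw, inter_eq_right.mpr hCF, inter_comm F T]
    omega
  have hle : #(F ∩ (C ∪ T ∪ matchedVertices M)) ≤ #F := card_le_card inter_subset_left
  refine ⟨by omega, fun heq v hv => ?_⟩
  have hcover : F ∩ (C ∪ T ∪ matchedVertices M) = F :=
    eq_of_subset_of_card_le inter_subset_left (by omega)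
  rw [← hcover, mem_inter, mem_union, mem_union, mem_matchedVertices] at hv
  obtain ⟨-, (hvC | hvT) | hvM⟩ := hv
  exacts [Or.inl hvC, Or.inr (Or.inr hvT), Or.inr (Or.inl hvM)]

/-- Counting faults: each edge of the matching `M` contains a faulty vertex, each
crashed vertex in `C` is faulty, and each triangle vertex `t ∈ T` that is non-faulty
forces both endpoints of its (distinct) matching edge to be faulty.  Then at least
`|C| + |M| + |T|` distinct faulty vertices exist; if this equals the number `t` of
true faults, every faulty replica is excluded from the candidate set. -/
theorem stmt14 {V : Type*} [Fintype V] [DecidableEq V]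
    (F : Finset V) (t : ℕ) (hF : F.card = t)
    (M : Finset (Sym2 V))
    (hMloop : ∀ e ∈ M, ¬ e.IsDiag)
    (hMdisj : ∀ e ∈ M, ∀ e' ∈ M, e ≠ e' → ∀ w : V, w ∈ e → w ∉ e')
    (hMF : ∀ e ∈ M, ∃ w ∈ F, w ∈ e)
    (T : Finset V) (et : V → Sym2 V)
    (hTunmatched : ∀ v ∈ T, ∀ e ∈ M, v ∉ e)
    (hTe : ∀ v ∈ T, et v ∈ M)
    (hTinj : ∀ v ∈ T, ∀ w ∈ T, et v = et w → v = w)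
    (hTforce : ∀ v ∈ T, v ∉ F → ∀ w : V, w ∈ et v → w ∈ F)
    (C : Finset V) (hCF : C ⊆ F)
    (hCM : ∀ v ∈ C, ∀ e ∈ M, v ∉ e)
    (hCT : ∀ v ∈ C, v ∉ T) :
    C.card + M.card + T.card ≤ t ∧
      (C.card + M.card + T.card = t →
        ∀ v ∈ F, v ∈ C ∨ (∃ e ∈ M, v ∈ e) ∨ v ∈ T) :=
  stmt14_general F t hF M hMloop hMdisj hMF T et hTunmatched hTe hTinj hTforce C hCF hCM hCT
end
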